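/- arXiv:0809.2363 — 3 statements merged into one kernel-verified Lean document; each statement's English description precedes it below -/
import Mathlib

section
/- For the driftless problem ẋ = Σ g_i(x) u_i, x(0)=x₀, x(T)=x_T with cost J(u) = ∫₀^T x(t)'Px(t) dt, P symmetric positive definite, if α = inf{x'Px : x in the attainable set A_{x₀}} and x_T ∈ A_{x₀}, then inf_u J(u) = αT. -/
open Matrix Real Set

lemma stDiff : Differentiable ℝ Real.smoothTransition :=
  (Real.smoothTransition.contDiff (n := 1)).differentiable (by simp)

set_option maxHeartbeats 1000000 in
open Matrix in
theorem stmt_7 {n k : ℕ} (g : Fin k → (Fin n → ℝ) → (Fin n → ℝ))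
    (hg : ∀ i, ContDiff ℝ (⊤ : ℕ∞) (g i))
    (P : Matrix (Fin n) (Fin n) ℝ) (hP : P.PosDef)
    (T : ℝ) (hT : 0 < T) (x₀ xT : Fin n → ℝ)
    (A : Set (Fin n → ℝ))
    (hA : A = {y | ∃ (S : ℝ) (u : ℝ → Fin k → ℝ) (x : ℝ → Fin n → ℝ),
        0 ≤ S ∧ x 0 = x₀ ∧ x S = y ∧
        ∀ t ∈ Set.Icc 0 S, HasDerivAt x (∑ i, u t i • g i (x t)) t})
    (hxT : xT ∈ A)
    (α : ℝ) (hα : α = sInf ((fun y => y ⬝ᵥ P.mulVec y) '' A)) :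
    sInf {c | ∃ (u : ℝ → Fin k → ℝ) (x : ℝ → Fin n → ℝ),
        x 0 = x₀ ∧ x T = xT ∧
        (∀ t ∈ Set.Icc 0 T, HasDerivAt x (∑ i, u t i • g i (x t)) t) ∧
        c = ∫ t in (0:ℝ)..T, (x t) ⬝ᵥ P.mulVec (x t)} = α * T := by
  classical
  set f : (Fin n → ℝ) → ℝ := fun y => y ⬝ᵥ P.mulVec y with hfdef
  have hfc : Continuous f := by
    simp only [hfdef, dotProduct, Matrix.mulVec]
    exact continuous_finset_sum _ fun i _ => (continuous_apply i).mul
      (continuous_finset_sum _ fun j _ => continuous_const.mul (continuous_apply j))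
  have hf0 : ∀ y, 0 ≤ f y := fun y => by
    simpa [hfdef] using hP.posSemidef.re_dotProduct_nonneg y
  have hAne : A.Nonempty := by
    refine ⟨x₀, ?_⟩
    rw [hA]
    exact ⟨0, fun _ _ => 0, fun _ => x₀, le_refl 0, rfl, rfl,
      fun t _ => by simpa using hasDerivAt_const t x₀⟩
  have hbdd : BddBelow (f '' A) := ⟨0, by rintro z ⟨y, -, rfl⟩; exact hf0 y⟩
  have hαle : ∀ y ∈ A, α ≤ f y := fun y hy => hα ▸ csInf_le hbdd ⟨y, hy, rfl⟩
  set K := {c | ∃ (u : ℝ → Fin k → ℝ) (x : ℝ → Fin n → ℝ),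
        x 0 = x₀ ∧ x T = xT ∧
        (∀ t ∈ Set.Icc 0 T, HasDerivAt x (∑ i, u t i • g i (x t)) t) ∧
        c = ∫ t in (0:ℝ)..T, (x t) ⬝ᵥ P.mulVec (x t)} with hK
  -- lower bound
  have lower : ∀ c ∈ K, α * T ≤ c := by
    rintro c ⟨u, x, hx0, hxT', hderiv, rfl⟩
    have hxc : ContinuousOn x (Set.Icc 0 T) :=
      fun t ht => (hderiv t ht).continuousAt.continuousWithinAt
    have hFint : IntervalIntegrable (fun t => (x t) ⬝ᵥ P.mulVec (x t))
        MeasureTheory.volume 0 T := by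
      apply ContinuousOn.intervalIntegrable
      rw [Set.uIcc_of_le hT.le]
      exact hfc.comp_continuousOn hxc
    have hmem : ∀ t ∈ Set.Icc 0 T, α ≤ (x t) ⬝ᵥ P.mulVec (x t) := by
      intro t ht
      refine hαle (x t) ?_
      rw [hA]
      exact ⟨t, u, x, ht.1, hx0, rfl,
        fun s hs => hderiv s ⟨hs.1, hs.2.trans ht.2⟩⟩
    calc α * T = ∫ _t in (0:ℝ)..T, α := by
          rw [intervalIntegral.integral_const, smul_eq_mul]; ring
      _ ≤ ∫ t in (0:ℝ)..T, (x t) ⬝ᵥ P.mulVec (x t) :=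
          intervalIntegral.integral_mono_on hT.le intervalIntegrable_const hFint hmem
  -- upper bound
  have upper : ∀ ε : ℝ, 0 < ε → ∃ c ∈ K, c ≤ α * T + ε := by
    intro ε hε
    have hεT : 0 < ε / (2 * T) := by positivity
    obtain ⟨z, hzmem, hz⟩ := exists_lt_of_csInf_lt (hAne.image f)
      (show sInf (f '' A) < α + ε / (2 * T) by rw [← hα]; linarith)
    obtain ⟨y, hyA, rfl⟩ := hzmem
    rw [hA] at hyA hxT
    obtain ⟨S₁, u₁, x₁, hS₁, hx₁0, hx₁e, hd₁⟩ := hyA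
    obtain ⟨S₂, u₂, x₂, hS₂, hx₂0, hx₂e, hd₂⟩ := hxT
    -- bounds on cost along the two trajectories
    obtain ⟨M₁, hM₁⟩ : ∃ M₁, ∀ s ∈ Set.Icc 0 S₁, f (x₁ s) ≤ M₁ := by
      obtain ⟨a, -, ha⟩ := isCompact_Icc.exists_isMaxOn (Set.nonempty_Icc.2 hS₁)
        (hfc.comp_continuousOn (fun s hs => (hd₁ s hs).continuousAt.continuousWithinAt))
      exact ⟨f (x₁ a), fun s hs => ha hs⟩
    obtain ⟨M₂, hM₂⟩ : ∃ M₂, ∀ s ∈ Set.Icc 0 S₂, f (x₂ s) ≤ M₂ := by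
      obtain ⟨a, -, ha⟩ := isCompact_Icc.exists_isMaxOn (Set.nonempty_Icc.2 hS₂)
        (hfc.comp_continuousOn (fun s hs => (hd₂ s hs).continuousAt.continuousWithinAt))
      exact ⟨f (x₂ a), fun s hs => ha hs⟩
    set M := max (max M₁ M₂) 0 with hMdef
    have hM0 : 0 ≤ M := le_max_right _ _
    have hM₁' : ∀ s ∈ Set.Icc 0 S₁, f (x₁ s) ≤ M :=
      fun s hs => (hM₁ s hs).trans ((le_max_left _ _).trans (le_max_left _ _))
    have hM₂' : ∀ s ∈ Set.Icc 0 S₂, f (x₂ s) ≤ M :=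
      fun s hs => (hM₂ s hs).trans ((le_max_right _ _).trans (le_max_left _ _))
    set δ := min (T / 8) (ε / (8 * (M + 1))) with hδdef
    have hδ0 : 0 < δ := lt_min (by linarith) (by positivity)
    have hδT : δ ≤ T / 8 := min_le_left _ _
    have hδε : δ ≤ ε / (8 * (M + 1)) := min_le_right _ _
    -- reparametrizations
    set ψ : ℝ → ℝ := fun t => S₁ * (smoothTransition (t / δ) *
      smoothTransition ((T - 2 * δ - t) / δ)) with hψdef
    set η : ℝ → ℝ := fun t => S₂ * smoothTransition ((t - (T - δ)) / δ) ^ 2 with hηdef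
    have hψdiff : Differentiable ℝ ψ := by
      apply Differentiable.const_mul
      exact (stDiff.comp (differentiable_id.div_const δ)).mul
        (stDiff.comp (((differentiable_const (T - 2 * δ)).sub differentiable_id).div_const δ))
    have hηdiff : Differentiable ℝ η := by
      apply Differentiable.const_mul
      exact (stDiff.comp ((differentiable_id.sub_const (T - δ)).div_const δ)).pow 2
    have hψr : ∀ t, ψ t ∈ Set.Icc 0 S₁ := by
      intro t
      simp only [hψdef]
      constructor
      · exact mul_nonneg hS₁ (mul_nonneg (Real.smoothTransition.nonneg _)
          (Real.smoothTransition.nonneg _))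
      · have hab : smoothTransition (t / δ) * smoothTransition ((T - 2 * δ - t) / δ) ≤ 1 :=
          mul_le_one₀ (Real.smoothTransition.le_one _) (Real.smoothTransition.nonneg _)
            (Real.smoothTransition.le_one _)
        calc S₁ * (smoothTransition (t / δ) * smoothTransition ((T - 2 * δ - t) / δ))
            ≤ S₁ * 1 := mul_le_mul_of_nonneg_left hab hS₁
          _ = S₁ := mul_one S₁
    have hηr : ∀ t, η t ∈ Set.Icc 0 S₂ := by
      intro t
      simp only [hηdef]
      constructor
      · exact mul_nonneg hS₂ (sq_nonneg _)
      · have hab : smoothTransition ((t - (T - δ)) / δ) ^ 2 ≤ 1 :=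
          pow_le_one₀ (Real.smoothTransition.nonneg _) (Real.smoothTransition.le_one _)
        calc S₂ * smoothTransition ((t - (T - δ)) / δ) ^ 2
            ≤ S₂ * 1 := mul_le_mul_of_nonneg_left hab hS₂
          _ = S₂ := mul_one S₂
    have hψ0 : ψ 0 = 0 := by simp [hψdef, Real.smoothTransition.zero]
    have hψzero : ∀ t, T - 2 * δ ≤ t → ψ t = 0 := by
      intro t ht
      have : smoothTransition ((T - 2 * δ - t) / δ) = 0 :=
        Real.smoothTransition.zero_of_nonpos (div_nonpos_of_nonpos_of_nonneg (by linarith) hδ0.le)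
      simp [hψdef, this]
    have hψmid : ∀ t, δ ≤ t → t ≤ T - 3 * δ → ψ t = S₁ := by
      intro t h1 h2
      have e1 : smoothTransition (t / δ) = 1 :=
        Real.smoothTransition.one_of_one_le ((one_le_div hδ0).2 h1)
      have e2 : smoothTransition ((T - 2 * δ - t) / δ) = 1 :=
        Real.smoothTransition.one_of_one_le ((one_le_div hδ0).2 (by linarith))
      simp [hψdef, e1, e2]
    have hηzero : ∀ t, t ≤ T - δ → η t = 0 := by
      intro t ht
      have : smoothTransition ((t - (T - δ)) / δ) = 0 :=
        Real.smoothTransition.zero_of_nonpos (div_nonpos_of_nonpos_of_nonneg (by linarith) hδ0.le)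
      simp [hηdef, this]
    have hηT : η T = S₂ := by
      simp [hηdef, div_self hδ0.ne', Real.smoothTransition.one]
    -- the glued trajectory
    set X : ℝ → Fin n → ℝ := fun t => if t ≤ T - δ then x₁ (ψ t) else x₂ (η t) with hXdef
    set u : ℝ → Fin k → ℝ := fun t i => if t ≤ T - δ then deriv ψ t * u₁ (ψ t) i
      else deriv η t * u₂ (η t) i with hudef
    have hXval₁ : ∀ t, t ≤ T - δ → X t = x₁ (ψ t) := fun t ht => if_pos ht
    have hXval₂ : ∀ t, ¬ t ≤ T - δ → X t = x₂ (η t) := fun t ht => if_neg ht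
    have hX0 : X 0 = x₀ := by
      rw [hXval₁ 0 (by linarith), hψ0, hx₁0]
    have hXT : X T = xT := by
      rw [hXval₂ T (by intro h; linarith), hηT, hx₂e]
    -- derivative on the left region
    have hXleft : ∀ t, t < T - δ → HasDerivAt X (∑ i, u t i • g i (X t)) t := by
      intro t ht
      have hchain : HasDerivAt (x₁ ∘ ψ)
          (deriv ψ t • ∑ i, u₁ (ψ t) i • g i (x₁ (ψ t))) t :=
        HasDerivAt.scomp (h := ψ) (x := t) (hd₁ (ψ t) (hψr t)) ((hψdiff t).hasDerivAt)
      have hEq : X =ᶠ[nhds t] (x₁ ∘ ψ) :=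
        Filter.eventuallyEq_of_mem (Iio_mem_nhds ht) fun s hs => if_pos (le_of_lt hs)
      have hgoal : (∑ i, u t i • g i (X t)) =
          deriv ψ t • ∑ i, u₁ (ψ t) i • g i (x₁ (ψ t)) := by
        rw [Finset.smul_sum]
        refine Finset.sum_congr rfl fun i _ => ?_
        rw [hXval₁ t ht.le]
        simp only [hudef, if_pos ht.le, smul_smul]
      rw [hgoal]
      exact hchain.congr_of_eventuallyEq hEq
    -- derivative on the right region
    have hXright : ∀ t, T - δ < t → HasDerivAt X (∑ i, u t i • g i (X t)) t := by
      intro t ht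
      have hchain : HasDerivAt (x₂ ∘ η)
          (deriv η t • ∑ i, u₂ (η t) i • g i (x₂ (η t))) t :=
        HasDerivAt.scomp (h := η) (x := t) (hd₂ (η t) (hηr t)) ((hηdiff t).hasDerivAt)
      have hEq : X =ᶠ[nhds t] (x₂ ∘ η) :=
        Filter.eventuallyEq_of_mem (Ioi_mem_nhds ht) fun s hs => if_neg (not_le.2 hs)
      have hgoal : (∑ i, u t i • g i (X t)) =
          deriv η t • ∑ i, u₂ (η t) i • g i (x₂ (η t)) := by
        rw [Finset.smul_sum]
        refine Finset.sum_congr rfl fun i _ => ?_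
        rw [hXval₂ t (not_le.2 ht)]
        simp only [hudef, if_neg (not_le.2 ht), smul_smul]
      rw [hgoal]
      exact hchain.congr_of_eventuallyEq hEq
    -- derivative at the junction
    have hψd0 : deriv ψ (T - δ) = 0 := by
      have hconst : HasDerivAt ψ 0 (T - δ) := by
        refine (hasDerivAt_const (T - δ) (0:ℝ)).congr_of_eventuallyEq ?_
        exact Filter.eventuallyEq_of_mem (Ioi_mem_nhds (show T - 2*δ < T - δ by linarith))
          fun s hs => hψzero s (le_of_lt hs)
      exact hconst.deriv
    have hjunc : HasDerivAt X (∑ i, u (T - δ) i • g i (X (T - δ))) (T - δ) := by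
      have hsum : (∑ i, u (T - δ) i • g i (X (T - δ))) = 0 := by
        apply Finset.sum_eq_zero
        intro i _
        simp [hudef, if_pos (le_refl (T - δ)), hψd0]
      rw [hsum]
      -- left piece: constant near the junction
      have hL : HasDerivAt (x₁ ∘ ψ) 0 (T - δ) := by
        refine (hasDerivAt_const (T - δ) (x₁ 0)).congr_of_eventuallyEq ?_
        exact Filter.eventuallyEq_of_mem (Ioi_mem_nhds (show T - 2*δ < T - δ by linarith))
          fun s hs => by simp [Function.comp, hψzero s (le_of_lt hs)]
      -- right piece: derivative of η vanishes at the junction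
      have hηd0 : HasDerivAt η 0 (T - δ) := by
        have h1 : HasDerivAt (fun s : ℝ => (s - (T - δ)) / δ) (1 / δ) (T - δ) := by
          simpa using ((hasDerivAt_id (T - δ)).sub_const (T - δ)).div_const δ
        have h2 : HasDerivAt (fun s : ℝ => smoothTransition ((s - (T - δ)) / δ))
            (deriv smoothTransition (((T - δ) - (T - δ)) / δ) * (1 / δ)) (T - δ) :=
          ((stDiff _).hasDerivAt).comp (T - δ) h1
        have h3 := (h2.pow 2).const_mul S₂
        refine HasDerivAt.congr_deriv h3 ?_
        simp [hηdef, Real.smoothTransition.zero]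
      have hR : HasDerivAt (x₂ ∘ η) 0 (T - δ) := by
        have := HasDerivAt.scomp (h := η) (x := T - δ) (hd₂ (η (T - δ)) (hηr _)) hηd0
        simpa using this
      have hl : HasDerivWithinAt X 0 (Set.Iic (T - δ)) (T - δ) := by
        refine (hL.hasDerivWithinAt).congr (fun s hs => hXval₁ s hs) ?_
        exact hXval₁ _ le_rfl
      have hr : HasDerivWithinAt X 0 (Set.Ici (T - δ)) (T - δ) := by
        refine (hR.hasDerivWithinAt).congr (fun s hs => ?_) ?_
        · by_cases h : s ≤ T - δ
          · have hs' : s = T - δ := le_antisymm h hs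
            rw [hs', hXval₁ _ le_rfl, hψzero _ (by linarith), hx₁0]
            simp [Function.comp, hηzero _ le_rfl, hx₂0]
          · rw [hXval₂ s h]; rfl
        · rw [hXval₁ _ le_rfl, hψzero _ (by linarith), hx₁0]
          simp [Function.comp, hηzero _ le_rfl, hx₂0]
      have := hl.union hr
      rw [Set.Iic_union_Ici] at this
      exact hasDerivWithinAt_univ.mp this
    have hX : ∀ t ∈ Set.Icc 0 T, HasDerivAt X (∑ i, u t i • g i (X t)) t := by
      intro t _
      rcases lt_trichotomy t (T - δ) with h | h | h
      · exact hXleft t h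
      · exact h ▸ hjunc
      · exact hXright t h
    -- cost estimate
    refine ⟨∫ t in (0:ℝ)..T, (X t) ⬝ᵥ P.mulVec (X t), ⟨u, X, hX0, hXT, hX, rfl⟩, ?_⟩
    have hXc : ContinuousOn X (Set.Icc 0 T) :=
      fun t ht => (hX t ht).continuousAt.continuousWithinAt
    have hFc : ContinuousOn (fun t => (X t) ⬝ᵥ P.mulVec (X t)) (Set.Icc 0 T) :=
      hfc.comp_continuousOn hXc
    have hint : ∀ a b : ℝ, 0 ≤ a → a ≤ b → b ≤ T →
        IntervalIntegrable (fun t => (X t) ⬝ᵥ P.mulVec (X t)) MeasureTheory.volume a b := by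
      intro a b ha hab hbT
      apply ContinuousOn.intervalIntegrable
      rw [Set.uIcc_of_le hab]
      exact hFc.mono (Set.Icc_subset_Icc ha hbT)
    have ord1 : (0:ℝ) ≤ δ := hδ0.le
    have ord2 : δ ≤ T - 3 * δ := by linarith
    have ord3 : T - 3 * δ ≤ T - δ := by linarith
    have ord4 : T - δ ≤ T := by linarith
    have e1 := intervalIntegral.integral_add_adjacent_intervals
      (hint 0 δ le_rfl ord1 (by linarith)) (hint δ (T - 3*δ) ord1 ord2 (by linarith))
    have e2 := intervalIntegral.integral_add_adjacent_intervals
      (hint 0 (T - 3*δ) le_rfl (by linarith) (by linarith))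
      (hint (T - 3*δ) (T - δ) (by linarith) ord3 ord4)
    have e3 := intervalIntegral.integral_add_adjacent_intervals
      (hint 0 (T - δ) le_rfl (by linarith) ord4) (hint (T - δ) T (by linarith) ord4 le_rfl)
    -- bound each piece
    have B1 : (∫ t in (0:ℝ)..δ, (X t) ⬝ᵥ P.mulVec (X t)) ≤ δ * M := by
      have := intervalIntegral.integral_mono_on ord1 (hint 0 δ le_rfl ord1 (by linarith))
        (intervalIntegrable_const (c := M)) (fun t ht => by
          rw [hXval₁ t (by rcases ht with ⟨_, h2⟩; linarith)]
          exact hM₁' _ (hψr t))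
      simpa using this
    have B2 : (∫ t in (δ:ℝ)..(T - 3*δ), (X t) ⬝ᵥ P.mulVec (X t)) ≤ T * f y := by
      have heq : ∀ t ∈ Set.uIcc δ (T - 3*δ), (X t) ⬝ᵥ P.mulVec (X t) = f y := by
        intro t ht
        rw [Set.uIcc_of_le ord2] at ht
        rw [hXval₁ t (by rcases ht with ⟨_, h2⟩; linarith), hψmid t ht.1 ht.2, hx₁e]
      rw [intervalIntegral.integral_congr heq, intervalIntegral.integral_const, smul_eq_mul]
      have := hf0 y
      nlinarith
    have B3 : (∫ t in (T - 3*δ)..(T - δ), (X t) ⬝ᵥ P.mulVec (X t)) ≤ 2 * δ * M := by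
      have := intervalIntegral.integral_mono_on ord3
        (hint (T - 3*δ) (T - δ) (by linarith) ord3 ord4)
        (intervalIntegrable_const (c := M)) (fun t ht => by
          rw [hXval₁ t ht.2]
          exact hM₁' _ (hψr t))
      rw [intervalIntegral.integral_const, smul_eq_mul] at this
      linarith
    have B4 : (∫ t in (T - δ)..T, (X t) ⬝ᵥ P.mulVec (X t)) ≤ δ * M := by
      have := intervalIntegral.integral_mono_on ord4
        (hint (T - δ) T (by linarith) ord4 le_rfl)
        (intervalIntegrable_const (c := M)) (fun t ht => by
          by_cases h : t ≤ T - δ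
          · rw [hXval₁ t h]; exact hM₁' _ (hψr t)
          · rw [hXval₂ t h]; exact hM₂' _ (hηr t))
      rw [intervalIntegral.integral_const, smul_eq_mul] at this
      linarith
    -- combine
    have hfy : f y ≤ α + ε / (2 * T) := hz.le
    have hM4 : 4 * δ * M ≤ ε / 2 := by
      have h1 : δ * (8 * (M + 1)) ≤ ε := (le_div_iff₀ (by positivity)).1 hδε
      nlinarith
    have hTfy : T * f y ≤ α * T + ε / 2 := by
      have := mul_le_mul_of_nonneg_left hfy hT.le
      calc T * f y ≤ T * (α + ε / (2 * T)) := this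
        _ = α * T + ε / 2 := by field_simp
    linarith [B1, B2, B3, B4, e1, e2, e3]
  -- conclude
  have hKne : K.Nonempty := by
    obtain ⟨c, hc, -⟩ := upper 1 one_pos
    exact ⟨c, hc⟩
  refine le_antisymm ?_ (le_csInf hKne lower)
  refine le_of_forall_pos_le_add ?_
  intro ε hε
  obtain ⟨c, hc, hcle⟩ := upper ε hε
  exact (csInf_le ⟨α * T, lower⟩ hc).trans hcle
end

section
/- For the driftless problem with cost J(u) = ∫₀^T x_u'Px_u dt and P > 0, if the infimum α = inf{x'Px : x ∈ A_{x₀}} is attained at some x̂ ∈ A_{x₀} and x_T ∈ A_{x₀}, then there exists a sequence of controls u_n with x_{u_n}(T) = x_T, J(u_n) ≤ inf J + C/n and ‖u_n‖²_{L²[0,T]} ≤ C·n for some constant C; consequently σ_T ≤ 1/2. -/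
open Set Matrix

section aux

variable {n k : ℕ} {g : Fin k → (Fin n → ℝ) → (Fin n → ℝ)}

lemma sol_reparam {u : ℝ → Fin k → ℝ} {x : ℝ → Fin n → ℝ} {S a b : ℝ}
    (h : ∀ t ∈ Set.Icc (0:ℝ) S, HasDerivAt x (∑ i, u t i • g i (x t)) t)
    {φ φd : ℝ → ℝ} (hφ : ∀ t, HasDerivAt φ (φd t) t)
    (hmap : ∀ t ∈ Set.Icc a b, φ t ∈ Set.Icc (0:ℝ) S) :
    ∀ t ∈ Set.Icc a b, HasDerivAt (fun s => x (φ s))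
      (∑ i, (φd t • u (φ t)) i • g i (x (φ t))) t := by
  intro t ht
  have h1 := HasDerivAt.scomp (𝕜 := ℝ) (𝕜' := ℝ) t (h (φ t) (hmap t ht)) (hφ t)
  have h2 : (∑ i, (φd t • u (φ t)) i • g i (x (φ t)))
      = φd t • ∑ i, u (φ t) i • g i (x (φ t)) := by
    rw [Finset.smul_sum]
    exact Finset.sum_congr rfl fun i _ => by
      rw [Pi.smul_apply, smul_eq_mul, smul_smul]
  rw [h2]
  exact h1

lemma sol_glue {u₁ u₂ : ℝ → Fin k → ℝ} {x₁ x₂ : ℝ → Fin n → ℝ} {a b c : ℝ}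
    (hab : a ≤ b) (hbc : b ≤ c)
    (h₁ : ∀ t ∈ Set.Icc a b, HasDerivAt x₁ (∑ i, u₁ t i • g i (x₁ t)) t)
    (h₂ : ∀ t ∈ Set.Icc b c, HasDerivAt x₂ (∑ i, u₂ t i • g i (x₂ t)) t)
    (hx : x₁ b = x₂ b) (hu₁ : u₁ b = 0) (hu₂ : u₂ b = 0) :
    ∀ t ∈ Set.Icc a c, HasDerivAt (fun t => if t ≤ b then x₁ t else x₂ t)
      (∑ i, (if t ≤ b then u₁ t else u₂ t) i •
        g i (if t ≤ b then x₁ t else x₂ t)) t := by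
  intro t ht
  rcases lt_trichotomy t b with hlt | heq | hgt
  · have ht1 : t ∈ Set.Icc a b := ⟨ht.1, hlt.le⟩
    have hev : (fun t => if t ≤ b then x₁ t else x₂ t) =ᶠ[nhds t] x₁ := by
      filter_upwards [Iio_mem_nhds hlt] with s hs
      have : s ≤ b := le_of_lt (Set.mem_Iio.mp hs)
      simp [this]
    have := (h₁ t ht1).congr_of_eventuallyEq hev
    simpa [hlt.le] using this
  · subst heq
    have hz1 : (∑ i, u₁ t i • g i (x₁ t)) = 0 := by simp [hu₁]
    have hz2 : (∑ i, u₂ t i • g i (x₂ t)) = 0 := by simp [hu₂]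
    have hIic : HasDerivWithinAt (fun s => if s ≤ t then x₁ s else x₂ s) 0 (Set.Iic t) t := by
      have h := (h₁ t ⟨hab, le_rfl⟩).hasDerivWithinAt (s := Set.Iic t)
      rw [hz1] at h
      exact h.congr (fun s hs => by simp [Set.mem_Iic.mp hs]) (by simp)
    have hIci : HasDerivWithinAt (fun s => if s ≤ t then x₁ s else x₂ s) 0 (Set.Ici t) t := by
      have h := (h₂ t ⟨le_rfl, hbc⟩).hasDerivWithinAt (s := Set.Ici t)
      rw [hz2] at h
      refine h.congr (fun s hs => ?_) (by simp [hx])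
      rcases eq_or_lt_of_le (Set.mem_Ici.mp hs) with h' | h'
      · simp [← h', hx]
      · simp [not_le.mpr h']
    have hu := hIic.union hIci
    rw [Set.Iic_union_Ici] at hu
    have h0 : (∑ i, (if t ≤ t then u₁ t else u₂ t) i •
        g i (if t ≤ t then x₁ t else x₂ t)) = 0 := by simp [hu₁]
    rw [h0]
    exact (hasDerivWithinAt_univ).mp hu
  · have ht2 : t ∈ Set.Icc b c := ⟨hgt.le, ht.2⟩
    have hev : (fun t => if t ≤ b then x₁ t else x₂ t) =ᶠ[nhds t] x₂ := by
      filter_upwards [Ioi_mem_nhds hgt] with s hs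
      have : ¬ s ≤ b := not_le.mpr (Set.mem_Ioi.mp hs)
      simp [this]
    have := (h₂ t ht2).congr_of_eventuallyEq hev
    simpa [not_le.mpr hgt] using this


lemma smul_norm_sq (c : ℝ) (v : Fin k → ℝ) : ‖c • v‖^2 = c^2 * ‖v‖^2 := by
  rw [norm_smul, mul_pow, Real.norm_eq_abs, sq_abs]

set_option maxHeartbeats 1000000 in
lemma master {p q : ℝ → Fin n → ℝ} {up uq : ℝ → Fin k → ℝ}
    (P : Matrix (Fin n) (Fin n) ℝ)
    {T M α V₁ V₂ : ℝ} {m : ℕ}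
    (hm : 1 ≤ m) (hT : 0 < T)
    (hQc : Continuous fun z : Fin n → ℝ => z ⬝ᵥ P.mulVec z)
    (hα : α = (p 1) ⬝ᵥ P.mulVec (p 1)) (hα0 : 0 ≤ α)
    (hp : ∀ t ∈ Set.Icc (0:ℝ) 1, HasDerivAt p (∑ i, up t i • g i (p t)) t)
    (hq : ∀ t ∈ Set.Icc (0:ℝ) 2, HasDerivAt q (∑ i, uq t i • g i (q t)) t)
    (hup1 : up 1 = 0) (huq0 : uq 0 = 0) (huq2 : uq 2 = 0)
    (hpq : p 1 = q 0)
    (hMp : ∀ s ∈ Set.Icc (0:ℝ) 1, (p s) ⬝ᵥ P.mulVec (p s) ≤ M)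
    (hMq : ∀ s ∈ Set.Icc (0:ℝ) 2, (q s) ⬝ᵥ P.mulVec (q s) ≤ M)
    (hV₁ : V₁ = ∫ s in (0:ℝ)..1, ‖up s‖^2) (hV₂ : V₂ = ∫ s in (0:ℝ)..2, ‖uq s‖^2) :
    ∃ (u : ℝ → Fin k → ℝ) (x : ℝ → Fin n → ℝ), x 0 = p 0 ∧ x T = q 2 ∧
      (∀ t ∈ Set.Icc (0:ℝ) T, HasDerivAt x (∑ i, u t i • g i (x t)) t) ∧
      (∫ t in (0:ℝ)..T, (x t) ⬝ᵥ P.mulVec (x t)) ≤ α*T + (2*M*T/3)/m ∧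
      (∫ t in (0:ℝ)..T, ‖u t‖^2) ≤ (3*(V₁+2*V₂)/T)*m := by
  have hm' : (1:ℝ) ≤ (m:ℝ) := by exact_mod_cast hm
  have hm0 : (0:ℝ) < (m:ℝ) := by linarith
  set a : ℝ := T/(3*m) with ha_def
  have ha : 0 < a := by positivity
  have hakey : a * (3*(m:ℝ)) = T := by rw [ha_def]; field_simp
  have haT : 3 * a ≤ T := by nlinarith
  have h2a : 2*a < T := by linarith
  have haTa : a < T - a := by linarith
  -- the three pieces
  have hφ1 : ∀ t : ℝ, HasDerivAt (fun t : ℝ => t/a) ((fun _ : ℝ => 1/a) t) t := by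
    intro t
    simpa using (hasDerivAt_id t).div_const a
  have hmap1 : ∀ t ∈ Set.Icc (0:ℝ) a, t/a ∈ Set.Icc (0:ℝ) 1 := by
    intro t ht
    exact ⟨div_nonneg ht.1 ha.le, (div_le_one ha).mpr ht.2⟩
  have sol1 : ∀ t ∈ Set.Icc (0:ℝ) a,
      HasDerivAt (fun t => p (t/a)) (∑ i, ((1/a) • up (t/a)) i • g i (p (t/a))) t := by
    intro t ht
    exact sol_reparam hp hφ1 hmap1 t ht
  have sol2 : ∀ t ∈ Set.Icc a (T-a),
      HasDerivAt (fun _ : ℝ => p 1) (∑ i, (fun _ : ℝ => (0 : Fin k → ℝ)) t i • g i (p 1)) t := by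
    intro t ht
    have : (∑ i, (0:ℝ) • g i (p 1)) = 0 := by simp
    simpa [this] using hasDerivAt_const t (p 1)
  have hglue1x : p (a/a) = p 1 := by rw [div_self ha.ne']
  have hglue1u : (1/a) • up (a/a) = (0 : Fin k → ℝ) := by
    rw [div_self ha.ne', hup1, smul_zero]
  have solA := sol_glue ha.le haTa.le sol1 sol2 hglue1x hglue1u rfl
  -- third piece
  have hφ3 : ∀ t : ℝ, HasDerivAt (fun t : ℝ => (t - (T-a)) * (2/a)) ((fun _ : ℝ => 2/a) t) t := by
    intro t
    simpa using ((hasDerivAt_id t).sub_const (T-a)).mul_const (2/a)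
  have hmap3 : ∀ t ∈ Set.Icc (T-a) T, (t - (T-a)) * (2/a) ∈ Set.Icc (0:ℝ) 2 := by
    intro t ht
    constructor
    · have : 0 ≤ t - (T-a) := by linarith [ht.1]
      positivity
    · have h1 : t - (T-a) ≤ a := by linarith [ht.2]
      calc (t - (T-a)) * (2/a) ≤ a * (2/a) := by
            apply mul_le_mul_of_nonneg_right h1 (by positivity)
        _ = 2 := by field_simp
  have sol3 : ∀ t ∈ Set.Icc (T-a) T,
      HasDerivAt (fun t => q ((t - (T-a)) * (2/a)))
        (∑ i, ((2/a) • uq ((t - (T-a)) * (2/a))) i • g i (q ((t - (T-a)) * (2/a)))) t := by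
    intro t ht
    exact sol_reparam hq hφ3 hmap3 t ht
  have hglue2x : (fun t => if t ≤ a then p (t/a) else p 1) (T-a) = q ((T-a - (T-a)) * (2/a)) := by
    simp [not_le.mpr haTa, hpq]
  have hglue2u1 : (fun t => if t ≤ a then (1/a) • up (t/a) else (0:Fin k → ℝ)) (T-a) = 0 := by
    simp [not_le.mpr haTa]
  have hglue2u2 : (2/a) • uq ((T-a - (T-a)) * (2/a)) = (0 : Fin k → ℝ) := by
    simp [huq0]
  have solX := sol_glue (by linarith : (0:ℝ) ≤ T - a) (by linarith : T - a ≤ T)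
    solA sol3 hglue2x hglue2u1 hglue2u2
  set X : ℝ → Fin n → ℝ :=
    fun t => if t ≤ T - a then (if t ≤ a then p (t/a) else p 1)
      else q ((t - (T-a)) * (2/a)) with hX_def
  set U : ℝ → Fin k → ℝ :=
    fun t => if t ≤ T - a then (if t ≤ a then (1/a) • up (t/a) else 0)
      else (2/a) • uq ((t - (T-a)) * (2/a)) with hU_def
  have hSol : ∀ t ∈ Set.Icc (0:ℝ) T, HasDerivAt X (∑ i, U t i • g i (X t)) t := solX
  have hX0 : X 0 = p 0 := by
    have h1 : (0:ℝ) ≤ T - a := by linarith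
    simp [hX_def, h1, ha.le, zero_div]
  have hXT : X T = q 2 := by
    have h1 : ¬ T ≤ T - a := by linarith
    have h2 : a * (2/a) = 2 := by field_simp
    simp [hX_def, h1, sub_sub_cancel, h2]
  refine ⟨U, X, hX0, hXT, hSol, ?_, ?_⟩
  · -- cost bound
    have hXc : ContinuousOn X (Set.Icc 0 T) := fun t ht =>
      ((hSol t ht).continuousAt).continuousWithinAt
    have hfc : ContinuousOn (fun t => (X t) ⬝ᵥ P.mulVec (X t)) (Set.uIcc (0:ℝ) T) := by
      rw [Set.uIcc_of_le hT.le]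
      exact hQc.comp_continuousOn hXc
    have hIf : IntervalIntegrable (fun t => (X t) ⬝ᵥ P.mulVec (X t)) MeasureTheory.volume 0 T :=
      hfc.intervalIntegrable
    have hsub1 : Set.uIcc (0:ℝ) a ⊆ Set.uIcc (0:ℝ) T := by
      rw [Set.uIcc_of_le ha.le, Set.uIcc_of_le hT.le]
      exact Set.Icc_subset_Icc le_rfl (by linarith)
    have hsub2 : Set.uIcc a (T-a) ⊆ Set.uIcc (0:ℝ) T := by
      rw [Set.uIcc_of_le haTa.le, Set.uIcc_of_le hT.le]
      exact Set.Icc_subset_Icc ha.le (by linarith)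
    have hsub3 : Set.uIcc (T-a) T ⊆ Set.uIcc (0:ℝ) T := by
      rw [Set.uIcc_of_le (by linarith : T - a ≤ T), Set.uIcc_of_le hT.le]
      exact Set.Icc_subset_Icc (by linarith) le_rfl
    have hsub12 : Set.uIcc (0:ℝ) (T-a) ⊆ Set.uIcc (0:ℝ) T := by
      rw [Set.uIcc_of_le (by linarith : (0:ℝ) ≤ T - a), Set.uIcc_of_le hT.le]
      exact Set.Icc_subset_Icc le_rfl (by linarith)
    have hI1 := hIf.mono_set hsub1
    have hI2 := hIf.mono_set hsub2
    have hI3 := hIf.mono_set hsub3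
    have hI12 := hIf.mono_set hsub12
    have hsplitA := intervalIntegral.integral_add_adjacent_intervals hI1 hI2
    have hsplitB := intervalIntegral.integral_add_adjacent_intervals hI12 hI3
    have hb1 : (∫ t in (0:ℝ)..a, (X t) ⬝ᵥ P.mulVec (X t)) ≤ a * M := by
      have hmono := intervalIntegral.integral_mono_on (μ := MeasureTheory.volume)
        (g := fun _ : ℝ => M) ha.le hI1 intervalIntegrable_const ?_
      · simpa using hmono
      · intro t ht
        have h1 : t ≤ a := ht.2
        have h2 : t ≤ T - a := by linarith
        have hxe : X t = p (t/a) := by simp [hX_def, h1, h2]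
        rw [hxe]
        exact hMp _ (hmap1 t ht)
    have hb2 : (∫ t in a..(T-a), (X t) ⬝ᵥ P.mulVec (X t)) = (T - a - a) * α := by
      have hcg : Set.EqOn (fun t => (X t) ⬝ᵥ P.mulVec (X t)) (fun _ => α)
          (Set.uIcc a (T-a)) := by
        rw [Set.uIcc_of_le haTa.le]
        intro t ht
        have h2 : t ≤ T - a := ht.2
        rcases eq_or_lt_of_le ht.1 with h1 | h1
        · have hxe : X t = p 1 := by
            simp only [hX_def]
            rw [if_pos h2, if_pos (le_of_eq h1.symm), ← h1, hglue1x]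
          simp only [hxe]
          exact hα.symm
        · have hxe : X t = p 1 := by simp [hX_def, h2, not_le.mpr h1]
          simp only [hxe]
          exact hα.symm
      rw [intervalIntegral.integral_congr hcg]
      simp [smul_eq_mul, mul_comm]
    have hb3 : (∫ t in (T-a)..T, (X t) ⬝ᵥ P.mulVec (X t)) ≤ a * M := by
      have hmono := intervalIntegral.integral_mono_on (μ := MeasureTheory.volume)
        (g := fun _ : ℝ => M) (by linarith : T - a ≤ T) hI3 intervalIntegrable_const ?_
      · have : T - (T - a) = a := by ring
        rw [intervalIntegral.integral_const, this, smul_eq_mul] at hmono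
        exact hmono
      · intro t ht
        by_cases h2 : t ≤ T - a
        · have hte : t = T - a := le_antisymm h2 ht.1
          have hxe : X t = p 1 := by
            rw [hte]; simp [hX_def, not_le.mpr haTa]
          rw [hxe, hpq]
          exact hMq 0 ⟨le_rfl, by norm_num⟩
        · have hxe : X t = q ((t - (T-a)) * (2/a)) := by simp [hX_def, h2]
          rw [hxe]
          exact hMq _ (hmap3 t ht)
    have harith : (2*M*T/3)/(m:ℝ) = 2*M*a := by rw [ha_def]; field_simp
    have hαa : 0 ≤ α * a := mul_nonneg hα0 ha.le
    have hgoal : (∫ t in (0:ℝ)..T, (X t) ⬝ᵥ P.mulVec (X t))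
        = (∫ t in (0:ℝ)..a, (X t) ⬝ᵥ P.mulVec (X t))
          + (∫ t in a..(T-a), (X t) ⬝ᵥ P.mulVec (X t))
          + (∫ t in (T-a)..T, (X t) ⬝ᵥ P.mulVec (X t)) := by
      rw [hsplitA, hsplitB]
    rw [hgoal, hb2, harith]
    nlinarith
  · -- control bound
    have hV₁0 : 0 ≤ V₁ := by
      rw [hV₁]
      exact intervalIntegral.integral_nonneg (by norm_num) (fun s _ => by positivity)
    have hV₂0 : 0 ≤ V₂ := by
      rw [hV₂]
      exact intervalIntegral.integral_nonneg (by norm_num) (fun s _ => by positivity)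
    by_cases hUi : IntervalIntegrable (fun t => ‖U t‖^2) MeasureTheory.volume 0 T
    · have hsub1 : Set.uIcc (0:ℝ) a ⊆ Set.uIcc (0:ℝ) T := by
        rw [Set.uIcc_of_le ha.le, Set.uIcc_of_le hT.le]
        exact Set.Icc_subset_Icc le_rfl (by linarith)
      have hsub2 : Set.uIcc a (T-a) ⊆ Set.uIcc (0:ℝ) T := by
        rw [Set.uIcc_of_le haTa.le, Set.uIcc_of_le hT.le]
        exact Set.Icc_subset_Icc ha.le (by linarith)
      have hsub3 : Set.uIcc (T-a) T ⊆ Set.uIcc (0:ℝ) T := by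
        rw [Set.uIcc_of_le (by linarith : T - a ≤ T), Set.uIcc_of_le hT.le]
        exact Set.Icc_subset_Icc (by linarith) le_rfl
      have hsub12 : Set.uIcc (0:ℝ) (T-a) ⊆ Set.uIcc (0:ℝ) T := by
        rw [Set.uIcc_of_le (by linarith : (0:ℝ) ≤ T - a), Set.uIcc_of_le hT.le]
        exact Set.Icc_subset_Icc le_rfl (by linarith)
      have hI1 := hUi.mono_set hsub1
      have hI2 := hUi.mono_set hsub2
      have hI3 := hUi.mono_set hsub3
      have hI12 := hUi.mono_set hsub12
      have hsplitA := intervalIntegral.integral_add_adjacent_intervals hI1 hI2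
      have hsplitB := intervalIntegral.integral_add_adjacent_intervals hI12 hI3
      have he1 : (∫ t in (0:ℝ)..a, ‖U t‖^2) = (1/a)^2 * (a * V₁) := by
        have hcg : Set.EqOn (fun t => ‖U t‖^2)
            (fun t => (1/a)^2 * ‖up (t/a)‖^2) (Set.uIcc (0:ℝ) a) := by
          rw [Set.uIcc_of_le ha.le]
          intro t ht
          have h1 : t ≤ a := ht.2
          have h2 : t ≤ T - a := by linarith
          simp only [hU_def]
          rw [if_pos h2, if_pos h1, smul_norm_sq]
        rw [intervalIntegral.integral_congr hcg, intervalIntegral.integral_const_mul]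
        congr 1
        have hcd := intervalIntegral.integral_comp_div (a := 0) (b := a) (c := a)
          (fun s => ‖up s‖^2) ha.ne'
        rw [zero_div, div_self ha.ne'] at hcd
        rw [hcd, smul_eq_mul, hV₁]
      have he2 : (∫ t in a..(T-a), ‖U t‖^2) = 0 := by
        have hcg : Set.EqOn (fun t => ‖U t‖^2) (fun _ => (0:ℝ)) (Set.uIcc a (T-a)) := by
          rw [Set.uIcc_of_le haTa.le]
          intro t ht
          have h2 : t ≤ T - a := ht.2
          rcases eq_or_lt_of_le ht.1 with h1 | h1
          · have hue : U t = 0 := by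
              simp only [hU_def]
              rw [if_pos h2, if_pos (le_of_eq h1.symm), ← h1, hglue1u]
            simp [hue]
          · have hue : U t = 0 := by simp [hU_def, h2, not_le.mpr h1]
            simp [hue]
        rw [intervalIntegral.integral_congr hcg]
        simp
      have he3 : (∫ t in (T-a)..T, ‖U t‖^2) = (2/a)^2 * ((a/2) * V₂) := by
        have hcg : Set.EqOn (fun t => ‖U t‖^2)
            (fun t => (2/a)^2 * ‖uq ((t - (T-a)) * (2/a))‖^2) (Set.uIcc (T-a) T) := by
          rw [Set.uIcc_of_le (by linarith : T - a ≤ T)]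
          intro t ht
          by_cases h2 : t ≤ T - a
          · have hte : t = T - a := le_antisymm h2 ht.1
            have hue : U t = 0 := by
              rw [hte, hU_def]
              simp [not_le.mpr haTa]
            have hts : t - (T - a) = 0 := by rw [hte, sub_self]
            show ‖U t‖^2 = (2/a)^2 * ‖uq ((t - (T-a)) * (2/a))‖^2
            rw [hue, hts, zero_mul, huq0]
            simp
          · have hue : U t = (2/a) • uq ((t - (T-a)) * (2/a)) := by simp [hU_def, h2]
            simp only [hue]
            rw [smul_norm_sq]
        rw [intervalIntegral.integral_congr hcg, intervalIntegral.integral_const_mul]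
        congr 1
        have hcs := intervalIntegral.integral_comp_sub_right (a := T-a) (b := T)
          (fun s => ‖uq (s * (2/a))‖^2) (T-a)
        rw [sub_self, sub_sub_cancel] at hcs
        rw [hcs]
        have hcm := intervalIntegral.integral_comp_mul_right (a := 0) (b := a)
          (fun s => ‖uq s‖^2) (c := 2/a) (by positivity)
        rw [zero_mul] at hcm
        have ha2 : a * (2/a) = 2 := by field_simp
        rw [ha2] at hcm
        rw [hcm, smul_eq_mul, inv_div, hV₂]
      have hgoal : (∫ t in (0:ℝ)..T, ‖U t‖^2)
          = (∫ t in (0:ℝ)..a, ‖U t‖^2) + (∫ t in a..(T-a), ‖U t‖^2)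
            + (∫ t in (T-a)..T, ‖U t‖^2) := by
        rw [hsplitA, hsplitB]
      rw [hgoal, he1, he2, he3]
      have harith : (1/a)^2 * (a * V₁) + 0 + (2/a)^2 * ((a/2) * V₂)
          = 3*(V₁+2*V₂)/T*(m:ℝ) := by
        rw [ha_def]
        field_simp
        ring
      rw [harith]
    · rw [intervalIntegral.integral_undef hUi]
      have : 0 ≤ 3*(V₁+2*V₂)/T*(m:ℝ) := by positivity
      linarith


lemma sigma_deriv (t : ℝ) : HasDerivAt (fun s : ℝ => s^2*(3-2*s)) (6*t-6*t^2) t := by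
  have h := (hasDerivAt_pow 2 t).mul (((hasDerivAt_id t).const_mul 2).const_sub 3)
  simp only [id_eq] at h
  refine h.congr_deriv ?_
  push_cast
  ring

lemma sigma_mul_mem {S τ : ℝ} (hS : 0 ≤ S) (hτ : τ ∈ Set.Icc (0:ℝ) 1) :
    S * (τ^2*(3-2*τ)) ∈ Set.Icc (0:ℝ) S := by
  obtain ⟨h0, h1⟩ := hτ
  constructor
  · nlinarith [mul_nonneg hS (mul_nonneg (sq_nonneg τ) (by linarith : (0:ℝ) ≤ 3-2*τ))]
  · nlinarith [mul_nonneg hS (mul_nonneg (sq_nonneg (1-τ)) (by linarith : (0:ℝ) ≤ 1+2*τ))]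

lemma contQ {n : ℕ} (P : Matrix (Fin n) (Fin n) ℝ) :
    Continuous fun z : Fin n → ℝ => z ⬝ᵥ P.mulVec z := by
  simp only [dotProduct, Matrix.mulVec]
  exact continuous_finset_sum _ fun i _ => (continuous_apply i).mul
    (continuous_finset_sum _ fun j _ => continuous_const.mul (continuous_apply j))

lemma Qnn {n : ℕ} {P : Matrix (Fin n) (Fin n) ℝ} (hP : P.PosDef) (z : Fin n → ℝ) :
    0 ≤ z ⬝ᵥ P.mulVec z := by
  have := hP.posSemidef.re_dotProduct_nonneg z
  simpa using this

end aux

set_option maxHeartbeats 1000000 in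
open Matrix in
theorem stmt_11 {n k : ℕ} (g : Fin k → (Fin n → ℝ) → (Fin n → ℝ))
    (hg : ∀ i, ContDiff ℝ (⊤ : ℕ∞) (g i))
    (P : Matrix (Fin n) (Fin n) ℝ) (hP : P.PosDef)
    (T : ℝ) (hT : 0 < T) (x₀ xT : Fin n → ℝ)
    (A : Set (Fin n → ℝ))
    (hA : A = {y | ∃ (S : ℝ) (u : ℝ → Fin k → ℝ) (x : ℝ → Fin n → ℝ),
        0 ≤ S ∧ x 0 = x₀ ∧ x S = y ∧
        ∀ t ∈ Set.Icc 0 S, HasDerivAt x (∑ i, u t i • g i (x t)) t})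
    (hxT : xT ∈ A)
    (xhat : Fin n → ℝ) (hxhat : xhat ∈ A)
    (hmin : ∀ y ∈ A, xhat ⬝ᵥ P.mulVec xhat ≤ y ⬝ᵥ P.mulVec y)
    (Jinf : ℝ)
    (hJinf : Jinf = sInf {c | ∃ (u : ℝ → Fin k → ℝ) (x : ℝ → Fin n → ℝ),
        x 0 = x₀ ∧ x T = xT ∧
        (∀ t ∈ Set.Icc 0 T, HasDerivAt x (∑ i, u t i • g i (x t)) t) ∧
        c = ∫ t in (0:ℝ)..T, (x t) ⬝ᵥ P.mulVec (x t)}) :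
    ∃ C > (0:ℝ), ∀ m : ℕ, 1 ≤ m →
      ∃ (u : ℝ → Fin k → ℝ) (x : ℝ → Fin n → ℝ),
        x 0 = x₀ ∧ x T = xT ∧
        (∀ t ∈ Set.Icc 0 T, HasDerivAt x (∑ i, u t i • g i (x t)) t) ∧
        (∫ t in (0:ℝ)..T, (x t) ⬝ᵥ P.mulVec (x t)) ≤ Jinf + C / m ∧
        (∫ t in (0:ℝ)..T, ‖u t‖ ^ 2) ≤ C * m := by
  rw [hA] at hxhat hxT
  obtain ⟨S₁, u₁, y₁, hS₁, hy₁0, hy₁S, hy₁⟩ := hxhat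
  obtain ⟨S₂, u₂, y₂, hS₂, hy₂0, hy₂S, hy₂⟩ := hxT
  -- build the master path p : x₀ → xhat on [0,1]
  obtain ⟨p, up, hp, hp0, hp1, hup1⟩ :
      ∃ (p : ℝ → Fin n → ℝ) (up : ℝ → Fin k → ℝ),
        (∀ t ∈ Set.Icc (0:ℝ) 1, HasDerivAt p (∑ i, up t i • g i (p t)) t) ∧
        p 0 = x₀ ∧ p 1 = xhat ∧ up 1 = 0 := by
    have hφ : ∀ t : ℝ, HasDerivAt (fun s : ℝ => S₁ * (s^2*(3-2*s)))
        ((fun s => S₁ * (6*s-6*s^2)) t) t := fun t => (sigma_deriv t).const_mul S₁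
    have hmapφ : ∀ t ∈ Set.Icc (0:ℝ) 1, S₁ * (t^2*(3-2*t)) ∈ Set.Icc (0:ℝ) S₁ :=
      fun t ht => sigma_mul_mem hS₁ ht
    refine ⟨fun s => y₁ (S₁ * (s^2*(3-2*s))),
      fun s => (S₁ * (6*s-6*s^2)) • u₁ (S₁ * (s^2*(3-2*s))),
      sol_reparam hy₁ hφ hmapφ, ?_, ?_, ?_⟩
    · norm_num [hy₁0]
    · norm_num [hy₁S]
    · norm_num
  -- build the master path q : xhat → x₀ → xT on [0,2]
  obtain ⟨q, uq, hq, hq0, hq2, huq0, huq2⟩ :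
      ∃ (q : ℝ → Fin n → ℝ) (uq : ℝ → Fin k → ℝ),
        (∀ t ∈ Set.Icc (0:ℝ) 2, HasDerivAt q (∑ i, uq t i • g i (q t)) t) ∧
        q 0 = xhat ∧ q 2 = xT ∧ uq 0 = 0 ∧ uq 2 = 0 := by
    have hψ : ∀ t : ℝ, HasDerivAt (fun s : ℝ => S₁ * ((1-s)^2*(3-2*(1-s))))
        ((fun s => -(S₁ * (6*(1-s)-6*(1-s)^2))) t) t := by
      intro t
      have h1 : HasDerivAt (fun s : ℝ => 1 - s) (-1) t := by
        simpa using (hasDerivAt_id t).const_sub 1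
      have h2 := ((sigma_deriv (1-t)).comp t h1).const_mul S₁
      refine h2.congr_deriv ?_
      ring
    have hmapψ : ∀ t ∈ Set.Icc (0:ℝ) 1, S₁ * ((1-t)^2*(3-2*(1-t))) ∈ Set.Icc (0:ℝ) S₁ :=
      fun t ht => sigma_mul_mem hS₁ ⟨by linarith [ht.2], by linarith [ht.1]⟩
    have hqa := sol_reparam hy₁ hψ hmapψ
    have hχ : ∀ t : ℝ, HasDerivAt (fun s : ℝ => S₂ * ((s-1)^2*(3-2*(s-1))))
        ((fun s => S₂ * (6*(s-1)-6*(s-1)^2)) t) t := by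
      intro t
      have h1 : HasDerivAt (fun s : ℝ => s - 1) 1 t := by
        simpa using (hasDerivAt_id t).sub_const 1
      have h2 := ((sigma_deriv (t-1)).comp t h1).const_mul S₂
      refine h2.congr_deriv ?_
      ring
    have hmapχ : ∀ t ∈ Set.Icc (1:ℝ) 2, S₂ * ((t-1)^2*(3-2*(t-1))) ∈ Set.Icc (0:ℝ) S₂ :=
      fun t ht => sigma_mul_mem hS₂ ⟨by linarith [ht.1], by linarith [ht.2]⟩
    have hqb := sol_reparam (a := 1) (b := 2) hy₂ hχ hmapχ
    have hxglue : y₁ (S₁ * ((1-(1:ℝ))^2*(3-2*(1-(1:ℝ))))) = y₂ (S₂ * (((1:ℝ)-1)^2*(3-2*((1:ℝ)-1)))) := by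
      norm_num [hy₁0, hy₂0]
    have huglue1 : (-(S₁ * (6*(1-(1:ℝ))-6*(1-(1:ℝ))^2))) • u₁ (S₁ * ((1-(1:ℝ))^2*(3-2*(1-(1:ℝ))))) = (0 : Fin k → ℝ) := by
      norm_num
    have huglue2 : (S₂ * (6*((1:ℝ)-1)-6*((1:ℝ)-1)^2)) • u₂ (S₂ * (((1:ℝ)-1)^2*(3-2*((1:ℝ)-1)))) = (0 : Fin k → ℝ) := by
      norm_num
    have hglued := sol_glue (by norm_num : (0:ℝ) ≤ 1) (by norm_num : (1:ℝ) ≤ 2)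
      hqa hqb hxglue huglue1 huglue2
    refine ⟨_, _, hglued, ?_, ?_, ?_, ?_⟩
    · norm_num [hy₁S]
    · norm_num [hy₂S]
    · norm_num
    · norm_num
  -- quadratic form facts
  have hQc := contQ P
  have hα0 : 0 ≤ xhat ⬝ᵥ P.mulVec xhat := Qnn hP xhat
  have hα : xhat ⬝ᵥ P.mulVec xhat = (p 1) ⬝ᵥ P.mulVec (p 1) := by rw [hp1]
  have hpq : p 1 = q 0 := by rw [hp1, hq0]
  -- compactness bounds
  have hpc : ContinuousOn (fun s => (p s) ⬝ᵥ P.mulVec (p s)) (Set.Icc (0:ℝ) 1) :=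
    hQc.comp_continuousOn (fun t ht => ((hp t ht).continuousAt).continuousWithinAt)
  have hqc : ContinuousOn (fun s => (q s) ⬝ᵥ P.mulVec (q s)) (Set.Icc (0:ℝ) 2) :=
    hQc.comp_continuousOn (fun t ht => ((hq t ht).continuousAt).continuousWithinAt)
  obtain ⟨M₁, hM₁⟩ := (isCompact_Icc.image_of_continuousOn hpc).bddAbove
  obtain ⟨M₂, hM₂⟩ := (isCompact_Icc.image_of_continuousOn hqc).bddAbove
  have hMp : ∀ s ∈ Set.Icc (0:ℝ) 1, (p s) ⬝ᵥ P.mulVec (p s) ≤ max M₁ M₂ :=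
    fun s hs => le_trans (hM₁ ⟨s, hs, rfl⟩) (le_max_left _ _)
  have hMq : ∀ s ∈ Set.Icc (0:ℝ) 2, (q s) ⬝ᵥ P.mulVec (q s) ≤ max M₁ M₂ :=
    fun s hs => le_trans (hM₂ ⟨s, hs, rfl⟩) (le_max_right _ _)
  have hM0 : 0 ≤ max M₁ M₂ :=
    le_trans (Qnn hP (p 0)) (hMp 0 ⟨le_rfl, by norm_num⟩)
  -- V bounds
  have hV₁0 : 0 ≤ ∫ s in (0:ℝ)..1, ‖up s‖^2 :=
    intervalIntegral.integral_nonneg (by norm_num) (fun s _ => by positivity)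
  have hV₂0 : 0 ≤ ∫ s in (0:ℝ)..2, ‖uq s‖^2 :=
    intervalIntegral.integral_nonneg (by norm_num) (fun s _ => by positivity)
  set α : ℝ := xhat ⬝ᵥ P.mulVec xhat with hα_def
  set M : ℝ := max M₁ M₂ with hM_def
  set V₁ : ℝ := ∫ s in (0:ℝ)..1, ‖up s‖^2 with hV₁_def
  set V₂ : ℝ := ∫ s in (0:ℝ)..2, ‖uq s‖^2 with hV₂_def
  -- the lower bound for Jinf
  have hJlb : α * T ≤ Jinf := by
    rw [hJinf]
    apply le_csInf
    · obtain ⟨u, x, hx0, hxT', hsol, _, _⟩ :=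
        master (g := g) P (le_refl 1) hT hQc hα hα0 hp hq hup1 huq0 huq2 hpq hMp hMq
          hV₁_def hV₂_def
      exact ⟨_, u, x, by rw [hx0, hp0], by rw [hxT', hq2], hsol, rfl⟩
    · rintro c ⟨u, x, hx0, hxT', hsol, rfl⟩
      have hxc : ContinuousOn x (Set.Icc 0 T) :=
        fun t ht => ((hsol t ht).continuousAt).continuousWithinAt
      have hint : IntervalIntegrable (fun t => (x t) ⬝ᵥ P.mulVec (x t))
          MeasureTheory.volume 0 T := by
        apply ContinuousOn.intervalIntegrable
        rw [Set.uIcc_of_le hT.le]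
        exact hQc.comp_continuousOn hxc
      have hlbp : ∀ t ∈ Set.Icc (0:ℝ) T, α ≤ (x t) ⬝ᵥ P.mulVec (x t) := by
        intro t ht
        apply hmin
        rw [hA]
        exact ⟨t, u, x, ht.1, hx0, rfl, fun s hs => hsol s ⟨hs.1, le_trans hs.2 ht.2⟩⟩
      have hmono := intervalIntegral.integral_mono_on (μ := MeasureTheory.volume)
        (f := fun _ : ℝ => α) hT.le intervalIntegrable_const hint hlbp
      rw [intervalIntegral.integral_const, sub_zero, smul_eq_mul] at hmono
      linarith [mul_comm α T ▸ hmono]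
  -- choose C
  refine ⟨2*M*T/3 + 3*(V₁+2*V₂)/T + 1, by positivity, ?_⟩
  intro m hm
  have hm0 : (0:ℝ) < (m:ℝ) := by exact_mod_cast Nat.lt_of_lt_of_le Nat.zero_lt_one hm
  obtain ⟨u, x, hx0, hxT', hsol, hcost, hctrl⟩ :=
    master (g := g) P hm hT hQc hα hα0 hp hq hup1 huq0 huq2 hpq hMp hMq hV₁_def hV₂_def
  refine ⟨u, x, by rw [hx0, hp0], by rw [hxT', hq2], hsol, ?_, ?_⟩
  · have h1 : (2*M*T/3)/(m:ℝ) ≤ (2*M*T/3 + 3*(V₁+2*V₂)/T + 1)/(m:ℝ) := by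
      have hle : 2*M*T/3 ≤ 2*M*T/3 + 3*(V₁+2*V₂)/T + 1 := by
        have : 0 ≤ 3*(V₁+2*V₂)/T := by positivity
        linarith
      exact (div_le_div_iff_of_pos_right hm0).mpr hle
    linarith [hcost]
  · have h2 : 3*(V₁+2*V₂)/T*(m:ℝ) ≤ (2*M*T/3 + 3*(V₁+2*V₂)/T + 1)*(m:ℝ) := by
      apply mul_le_mul_of_nonneg_right ?_ hm0.le
      have : 0 ≤ 2*M*T/3 := by positivity
      linarith
    linarith [hctrl]
end

section
/- Approximation of the Dirac delta derivative lower bound: for integers p ≥ m ≥ 1 and T > 0, there exists a constant c > 0 such that for all sufficiently small η > 0, every u ∈ L²[0,T] with ‖φᵖu − t^{p−m}/(p−m)!‖_{L²[0,T]} < η satisfies ‖u‖_{L²[0,T]} ≥ c·η^{−(2m−1)/(2(p−m)+1)}. -/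
noncomputable def primitive (u : ℝ → ℝ) : ℝ → ℝ := fun t => ∫ τ in (0:ℝ)..t, u τ

/-! Put `k = p - m` and `w = φᵖu - tᵏ/k!`, and fix a scale `s` with `s² ≤ T`. By Chebyshev's
inequality `|w t| ≤ 2η/s` at some `t ∈ (s²/2, s²]`, while Cauchy–Schwarz followed by `p - 1`
crude integrations gives `|φᵖu t| ≤ s^(2p-1) ‖u‖`. As `tᵏ/k! ≥ s^(2k)/(2ᵏ k!)`, this forces
`1/(2ᵏ k!) ≤ s^(2m-1) ‖u‖ + 2η/s^(2k+1)`, and the choice `s^(2k+1) = 4 · 2ᵏ k! · η` balances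
the two terms, giving `‖u‖ ≳ η^(-(2m-1)/(2k+1))`. -/

open MeasureTheory intervalIntegral Set
open scoped Nat

theorem exists_mem_Ioc_mul_le_intervalIntegral {f : ℝ → ℝ} {a b : ℝ} (hab : a < b)
    (hf : IntervalIntegrable f volume a b) :
    ∃ x ∈ Ioc a b, f x * (b - a) ≤ ∫ x in a..b, f x := by
  obtain ⟨x, hx, hle⟩ := exists_le_setAverage (μ := volume) (by simp [hab]) (by simp) hf.1
  refine ⟨x, hx, ?_⟩
  rwa [setAverage_eq, measureReal_def, Real.volume_Ioc,
    ENNReal.toReal_ofReal (sub_nonneg.2 hab.le), smul_eq_mul, ← integral_of_le hab.le,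
    le_inv_mul_iff₀ (sub_pos.2 hab), mul_comm] at hle

theorem sq_intervalIntegral_le {u : ℝ → ℝ} {a b : ℝ} (hab : a ≤ b)
    (hu : IntervalIntegrable u volume a b)
    (hu2 : IntervalIntegrable (fun x => u x ^ 2) volume a b) :
    (∫ x in a..b, u x) ^ 2 ≤ (b - a) * ∫ x in a..b, u x ^ 2 := by
  rcases hab.eq_or_lt with rfl | hlt
  · simp
  set I := ∫ x in a..b, u x
  set c := I / (b - a)
  have hcI : c * (b - a) = I := div_mul_cancel₀ _ (sub_pos.2 hlt).ne'
  have hexpand :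
      ∫ x in a..b, (u x - c) ^ 2 = (∫ x in a..b, u x ^ 2) - 2 * c * I + c ^ 2 * (b - a) := by
    have hsq : ∀ x, (u x - c) ^ 2 = (u x ^ 2 - 2 * c * u x) + c ^ 2 := fun x => by ring
    simp_rw [hsq]
    rw [integral_add (hu2.sub (hu.const_mul _)) intervalIntegrable_const,
      integral_sub hu2 (hu.const_mul _), intervalIntegral.integral_const_mul,
      intervalIntegral.integral_const, smul_eq_mul]
    ring
  have hnonneg : 0 ≤ ∫ x in a..b, (u x - c) ^ 2 := integral_nonneg hab fun _ _ => sq_nonneg _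
  rw [hexpand] at hnonneg
  nlinarith [mul_nonneg (sub_nonneg.2 hab) hnonneg]

theorem abs_primitive_iterate_le {f : ℝ → ℝ} {a M : ℝ} (hf : ∀ x ∈ Icc 0 a, |f x| ≤ M) (j : ℕ) :
    ∀ x ∈ Icc 0 a, |primitive^[j] f x| ≤ M * x ^ j := by
  induction j with
  | zero => simpa using hf
  | succ j ih =>
    intro x hx
    have hM : 0 ≤ M := (abs_nonneg _).trans (hf 0 ⟨le_rfl, hx.1.trans hx.2⟩)
    have hbound : ∀ y ∈ uIoc 0 x, ‖primitive^[j] f y‖ ≤ M * x ^ j := fun y hy => by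
      rw [uIoc_of_le hx.1] at hy
      calc ‖primitive^[j] f y‖ ≤ M * y ^ j := ih y ⟨hy.1.le, hy.2.trans hx.2⟩
        _ ≤ M * x ^ j := mul_le_mul_of_nonneg_left (pow_le_pow_left₀ hy.1.le hy.2 j) hM
    calc |primitive^[j + 1] f x| = ‖∫ y in (0:ℝ)..x, primitive^[j] f y‖ := by
          rw [Function.iterate_succ_apply']; rfl
      _ ≤ M * x ^ j * |x - 0| := norm_integral_le_of_norm_le_const hbound
      _ = M * x ^ (j + 1) := by rw [sub_zero, abs_of_nonneg hx.1]; ring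

theorem continuousOn_primitive {u : ℝ → ℝ} {T : ℝ} (hu : IntervalIntegrable u volume 0 T) :
    ContinuousOn (primitive u) (uIcc 0 T) :=
  continuousOn_primitive_interval' hu left_mem_uIcc

theorem continuousOn_primitive_iterate {u : ℝ → ℝ} {T : ℝ} (hu : IntervalIntegrable u volume 0 T)
    (j : ℕ) : ContinuousOn (primitive^[j + 1] u) (uIcc 0 T) := by
  induction j with
  | zero => exact continuousOn_primitive hu
  | succ j ih =>
    rw [Function.iterate_succ_apply']
    exact continuousOn_primitive ih.intervalIntegrable

theorem abs_primitive_le {u : ℝ → ℝ} {T x : ℝ} (hu : IntervalIntegrable u volume 0 T)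
    (hu2 : IntervalIntegrable (fun t => u t ^ 2) volume 0 T) (hx : x ∈ Icc 0 T) :
    |primitive u x| ≤ √x * √(∫ t in (0:ℝ)..T, u t ^ 2) := by
  have hsub : uIcc 0 x ⊆ uIcc 0 T := uIcc_subset_uIcc_left (by rwa [uIcc_of_le (hx.1.trans hx.2)])
  have hcs := sq_intervalIntegral_le hx.1 (hu.mono_set hsub) (hu2.mono_set hsub)
  have hmono : ∫ t in (0:ℝ)..x, u t ^ 2 ≤ ∫ t in (0:ℝ)..T, u t ^ 2 :=
    integral_mono_interval le_rfl hx.1 hx.2 (ae_of_all _ fun _ => sq_nonneg _) hu2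
  rw [← Real.sqrt_mul hx.1, ← Real.sqrt_sq_eq_abs]
  refine Real.sqrt_le_sqrt ?_
  calc primitive u x ^ 2 ≤ x * ∫ t in (0:ℝ)..x, u t ^ 2 := by simpa [primitive] using hcs
    _ ≤ x * ∫ t in (0:ℝ)..T, u t ^ 2 := mul_le_mul_of_nonneg_left hmono hx.1

theorem one_div_le_of_primitive_iterate_close {k m : ℕ} (hm : 1 ≤ m) {T s η : ℝ} {u : ℝ → ℝ}
    (hu : IntervalIntegrable u volume 0 T)
    (hu2 : IntervalIntegrable (fun t => u t ^ 2) volume 0 T) (hs : 0 < s) (hsT : s ^ 2 ≤ T)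
    (hclose : √(∫ t in (0:ℝ)..T, (primitive^[k + m] u t - t ^ k / k !) ^ 2) ≤ η) :
    1 / (2 ^ k * k !) ≤
      s ^ (2 * m - 1) * √(∫ t in (0:ℝ)..T, u t ^ 2) + 2 * η / s ^ (2 * k + 1) := by
  obtain ⟨n, hn⟩ : ∃ n, k + m = n + 1 := ⟨k + m - 1, by omega⟩
  rw [hn] at hclose
  obtain ⟨hη, hE⟩ := Real.sqrt_le_iff.1 hclose
  set N := √(∫ t in (0:ℝ)..T, u t ^ 2)
  set v := primitive^[n + 1] u
  set w := fun t => v t - t ^ k / (k ! : ℝ)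
  have hv : ∀ x ∈ Icc 0 (s ^ 2), |v x| ≤ s ^ (2 * k) * (s ^ (2 * m - 1) * N) := by
    intro x hx
    have hφu : ∀ y ∈ Icc 0 (s ^ 2), |primitive u y| ≤ s * N := fun y hy =>
      (abs_primitive_le hu hu2 ⟨hy.1, hy.2.trans hsT⟩).trans <| mul_le_mul_of_nonneg_right
        (Real.sqrt_le_left hs.le |>.2 hy.2) (Real.sqrt_nonneg _)
    calc |v x| = |primitive^[n] (primitive u) x| := rfl
      _ ≤ s * N * x ^ n := abs_primitive_iterate_le hφu n x hx
      _ ≤ s * N * (s ^ 2) ^ n := by gcongr; exact hx.1; exact hx.2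
      _ = s ^ (2 * k) * (s ^ (2 * m - 1) * N) := by
        rw [← mul_assoc, ← pow_add, show 2 * k + (2 * m - 1) = 2 * n + 1 by omega]
        ring
  have hw2 : IntervalIntegrable (fun x => w x ^ 2) volume 0 T :=
    (((continuousOn_primitive_iterate hu n).sub
      ((continuous_pow k).div_const _).continuousOn).pow 2).intervalIntegrable
  have hs2 : 0 < s ^ 2 := by positivity
  have hsub : uIcc (s ^ 2 / 2) (s ^ 2) ⊆ uIcc 0 T := by
    rw [uIcc_of_le (half_le_self hs2.le), uIcc_of_le (hs2.le.trans hsT)]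
    exact Icc_subset_Icc (by positivity) hsT
  obtain ⟨t, ht, hwt⟩ :=
    exists_mem_Ioc_mul_le_intervalIntegral (half_lt_self hs2) (hw2.mono_set hsub)
  have hmono : ∫ x in (s ^ 2 / 2)..(s ^ 2), w x ^ 2 ≤ ∫ x in (0:ℝ)..T, w x ^ 2 :=
    integral_mono_interval (by positivity) (half_le_self hs2.le) hsT
      (ae_of_all _ fun _ => sq_nonneg _) hw2
  have hwt' : |w t| ≤ 2 * η / s := by
    refine abs_le_of_sq_le_sq ?_ (by positivity)
    rw [div_pow, le_div_iff₀ hs2]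
    nlinarith
  have hpow : (s ^ 2 / 2) ^ k ≤ t ^ k := pow_le_pow_left₀ (by positivity) ht.1.le k
  have hpoint : s ^ (2 * k) / (2 ^ k * k !) ≤ s ^ (2 * k) * (s ^ (2 * m - 1) * N) + 2 * η / s :=
    calc s ^ (2 * k) / (2 ^ k * k !) = (s ^ 2 / 2) ^ k / (k ! : ℝ) := by
          rw [div_pow, pow_mul, div_div]
      _ ≤ t ^ k / (k ! : ℝ) := by gcongr
      _ = v t - w t := by simp [w]
      _ ≤ |v t| + |w t| := (le_abs_self _).trans (abs_sub _ _)
      _ ≤ _ := add_le_add (hv t ⟨ht.1.le.trans' (by positivity), ht.2⟩) hwt'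
  refine le_of_mul_le_mul_left ?_ (pow_pos hs (2 * k))
  calc s ^ (2 * k) * (1 / (2 ^ k * k !)) = s ^ (2 * k) / (2 ^ k * k !) := by ring
    _ ≤ _ := hpoint
    _ = _ := by field_simp; ring

theorem stmt_14 (p m : ℕ) (hm : 1 ≤ m) (hpm : m ≤ p) (T : ℝ) (hT : 0 < T) :
    ∃ c > (0:ℝ), ∃ η₀ > (0:ℝ), ∀ η : ℝ, 0 < η → η < η₀ →
      ∀ u : ℝ → ℝ, IntervalIntegrable u MeasureTheory.volume 0 T →
        IntervalIntegrable (fun t => (u t) ^ 2) MeasureTheory.volume 0 T →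
        Real.sqrt (∫ t in (0:ℝ)..T,
            ((primitive^[p] u) t - t ^ (p - m) / (Nat.factorial (p - m))) ^ 2) < η →
        c * η ^ (-((2 * (m : ℝ) - 1) / (2 * ((p : ℝ) - m) + 1))) ≤
          Real.sqrt (∫ t in (0:ℝ)..T, (u t) ^ 2) := by
  obtain ⟨k, rfl⟩ : ∃ k, p = k + m := ⟨p - m, by omega⟩
  set K : ℝ := 2 ^ k * (k ! : ℝ)
  set α : ℝ := ((2 * m - 1 : ℕ) : ℝ) / ((2 * k + 1 : ℕ) : ℝ)
  have hα : (2 * (m : ℝ) - 1) / (2 * (((k + m : ℕ) : ℝ) - m) + 1) = α := by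
    simp only [α]
    push_cast [Nat.cast_sub (by omega : 1 ≤ 2 * m)]
    ring
  refine ⟨(4 * K) ^ (-α) / (2 * K), by positivity, √T ^ (2 * k + 1) / (4 * K), by positivity, ?_⟩
  intro η hη hηη₀ u hu hu2 hclose
  rw [Nat.add_sub_cancel] at hclose
  rw [hα]
  set s := (4 * K * η) ^ (((2 * k + 1 : ℕ) : ℝ)⁻¹)
  have hs : 0 < s := by positivity
  have hs_pow : s ^ (2 * k + 1) = 4 * K * η := Real.rpow_inv_natCast_pow (by positivity) (by omega)
  have hsT : s ^ 2 ≤ T := by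
    have hlt : s ^ (2 * k + 1) < √T ^ (2 * k + 1) := by
      rw [hs_pow]
      rwa [lt_div_iff₀' (by positivity)] at hηη₀
    exact ((Real.lt_sqrt hs.le).1
      ((pow_lt_pow_iff_left₀ hs.le (Real.sqrt_nonneg T) (by omega)).1 hlt)).le
  have hsα : s ^ (2 * m - 1) = (4 * K * η) ^ α := by
    rw [← Real.rpow_natCast, ← Real.rpow_mul (by positivity), inv_mul_eq_div]
  have hkey := one_div_le_of_primitive_iterate_close hm hu hu2 hs hsT hclose.le
  rw [hs_pow, hsα, show 2 * η / (4 * K * η) = 1 / (2 * K) by field_simp; ring] at hkey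
  calc (4 * K) ^ (-α) / (2 * K) * η ^ (-α) = ((4 * K * η) ^ α)⁻¹ * (1 / (2 * K)) := by
        rw [Real.mul_rpow (by positivity) hη.le, Real.rpow_neg (by positivity),
          Real.rpow_neg hη.le]
        ring
    _ ≤ √(∫ t in (0:ℝ)..T, u t ^ 2) := by
      rw [inv_mul_le_iff₀ (by positivity)]
      linarith [show 1 / K = 2 * (1 / (2 * K)) by field_simp]
end
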